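/- A skew quadrilateral P₁P₂P₃P₄ in ℝ³ whose opposite sides have equal lengths, ‖P₁−P₂‖ = ‖P₃−P₄‖ and ‖P₂−P₃‖ = ‖P₄−P₁‖, admits a line ℓ such that the half-turn (rotation by π) about ℓ maps P₁ ↦ P₃, P₂ ↦ P₄, P₃ ↦ P₁, P₄ ↦ P₂; in particular ℓ passes through the midpoints of the diagonals P₁P₃ and P₂P₄. -/

import Mathlib

/-!
Polarization turns the two equalities of opposite sides into the statement that the vector
`P₂ + P₄ - P₁ - P₃`, twice the vector joining the midpoints of the diagonals, is orthogonal to both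
diagonals. So there is a unit vector `u` orthogonal to both diagonals with the midpoint of `P₂P₄`
on the line through the midpoint of `P₁P₃` in direction `u` (when the midpoints coincide, any `u`
orthogonal to both diagonals, which exists in dimension three). The half-turn about that line
fixes the midpoint of each diagonal and reverses each diagonal, which is perpendicular to the
axis, so it swaps the endpoints of both diagonals.
-/

/-- Squared Euclidean distance in `ℝ³`. -/
noncomputable def sqDist (v w : Fin 3 → ℝ) : ℝ := ∑ k, (v k - w k) ^ 2

/-- The half-turn (rotation by π) about the line through `c` with unit direction `u`:
`x ↦ c + 2⟪x − c, u⟫·u − (x − c)`. -/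
noncomputable def halfTurn (c u x : Fin 3 → ℝ) : Fin 3 → ℝ :=
  c + (2 * (∑ k, (x k - c k) * u k)) • u - (x - c)

open Module Submodule
open scoped RealInnerProductSpace

section InnerProductSpace

variable {E : Type*} [NormedAddCommGroup E] [InnerProductSpace ℝ E] [FiniteDimensional ℝ E]

theorem exists_norm_eq_one_inner_eq_zero_of_two_lt_finrank (hE : 2 < finrank ℝ E) (a b : E) :
    ∃ u : E, ‖u‖ = 1 ∧ ⟪a, u⟫ = 0 ∧ ⟪b, u⟫ = 0 := by
  classical
  set K := span ℝ (({a, b} : Finset E) : Set E)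
  have hK : finrank ℝ K ≤ 2 := (finrank_span_finset_le_card {a, b}).trans Finset.card_le_two
  obtain ⟨v, hv, hv0⟩ : ∃ v ∈ Kᗮ, v ≠ 0 := by
    apply exists_mem_ne_zero_of_ne_bot
    intro h
    have := K.finrank_add_finrank_orthogonal
    rw [h, finrank_bot] at this
    omega
  have horth : ∀ w ∈ ({a, b} : Finset E), ⟪w, v⟫ = 0 := fun w hw => hv w (subset_span hw)
  refine ⟨‖v‖⁻¹ • v, norm_smul_inv_norm hv0, ?_, ?_⟩ <;>
    simp [inner_smul_right, horth]

theorem exists_norm_eq_one_inner_eq_zero_and_eq_smul (hE : 2 < finrank ℝ E) {a b d : E}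
    (ha : ⟪d, a⟫ = 0) (hb : ⟪d, b⟫ = 0) :
    ∃ u : E, ‖u‖ = 1 ∧ ⟪a, u⟫ = 0 ∧ ⟪b, u⟫ = 0 ∧ ∃ t : ℝ, d = t • u := by
  by_cases hd : d = 0
  · obtain ⟨u, hu, hau, hbu⟩ := exists_norm_eq_one_inner_eq_zero_of_two_lt_finrank hE a b
    exact ⟨u, hu, hau, hbu, 0, by rw [hd, zero_smul]⟩
  · refine ⟨‖d‖⁻¹ • d, norm_smul_inv_norm hd, ?_, ?_, ‖d‖, ?_⟩
    · rw [inner_smul_right, real_inner_comm, ha, mul_zero]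
    · rw [inner_smul_right, real_inner_comm, hb, mul_zero]
    · rw [smul_smul, mul_inv_cancel₀ (norm_ne_zero_iff.2 hd), one_smul]

end InnerProductSpace

theorem exists_dotProduct_self_eq_one_dotProduct_eq_zero_and_eq_smul {a b d : Fin 3 → ℝ}
    (ha : d ⬝ᵥ a = 0) (hb : d ⬝ᵥ b = 0) :
    ∃ u : Fin 3 → ℝ, u ⬝ᵥ u = 1 ∧ a ⬝ᵥ u = 0 ∧ b ⬝ᵥ u = 0 ∧ ∃ t : ℝ, d = t • u := by
  have hE : 2 < finrank ℝ (EuclideanSpace ℝ (Fin 3)) := by simp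
  obtain ⟨u, hu, hau, hbu, t, ht⟩ := exists_norm_eq_one_inner_eq_zero_and_eq_smul hE
    (a := WithLp.toLp 2 a) (b := WithLp.toLp 2 b) (d := WithLp.toLp 2 d)
    (by simpa [EuclideanSpace.inner_toLp_toLp, dotProduct_comm] using ha)
    (by simpa [EuclideanSpace.inner_toLp_toLp, dotProduct_comm] using hb)
  refine ⟨u.ofLp, ?_, ?_, ?_, t, congrArg WithLp.ofLp ht⟩
  · have := real_inner_self_eq_norm_sq u
    rw [hu, EuclideanSpace.inner_eq_star_dotProduct] at this
    simpa using this
  · simpa [EuclideanSpace.inner_eq_star_dotProduct, dotProduct_comm] using hau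
  · simpa [EuclideanSpace.inner_eq_star_dotProduct, dotProduct_comm] using hbu

theorem halfTurn_def (c u x : Fin 3 → ℝ) :
    halfTurn c u x = c + (2 * ((x - c) ⬝ᵥ u)) • u - (x - c) :=
  rfl

theorem halfTurn_eq_of_midpoint {c u x y : Fin 3 → ℝ} {t : ℝ} (hu : u ⬝ᵥ u = 1)
    (hxy : (x - y) ⬝ᵥ u = 0) (hmid : (1 / 2 : ℝ) • (x + y) = c + t • u) :
    halfTurn c u x = y := by
  obtain rfl : c = (1 / 2 : ℝ) • (x + y) - t • u := by rw [hmid]; abel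
  have hxc : (x - ((1 / 2 : ℝ) • (x + y) - t • u)) ⬝ᵥ u = t := by
    have : x - ((1 / 2 : ℝ) • (x + y) - t • u) = (1 / 2 : ℝ) • (x - y) + t • u := by module
    rw [this, add_dotProduct, smul_dotProduct, smul_dotProduct, hxy, hu]
    simp
  rw [halfTurn_def, hxc]
  module

theorem halfTurn_halfTurn {c u : Fin 3 → ℝ} (hu : u ⬝ᵥ u = 1) (x : Fin 3 → ℝ) :
    halfTurn c u (halfTurn c u x) = x := by
  have hsub : halfTurn c u x - c = (2 * ((x - c) ⬝ᵥ u)) • u - (x - c) := by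
    rw [halfTurn_def]; abel
  have hdot : (halfTurn c u x - c) ⬝ᵥ u = (x - c) ⬝ᵥ u := by
    rw [hsub, sub_dotProduct, smul_dotProduct, hu, smul_eq_mul]; ring
  rw [halfTurn_def, hdot, hsub]
  abel

theorem isogram_diagonals_orthogonal {P₁ P₂ P₃ P₄ : Fin 3 → ℝ}
    (h₁ : sqDist P₁ P₂ = sqDist P₃ P₄) (h₂ : sqDist P₂ P₃ = sqDist P₄ P₁) :
    (P₂ + P₄ - P₁ - P₃) ⬝ᵥ (P₁ - P₃) = 0 ∧ (P₂ + P₄ - P₁ - P₃) ⬝ᵥ (P₂ - P₄) = 0 := by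
  simp only [sqDist, dotProduct, Fin.sum_univ_three, Pi.add_apply, Pi.sub_apply] at h₁ h₂ ⊢
  constructor
  · linear_combination (h₂ - h₁) / 2
  · linear_combination (h₁ + h₂) / 2

theorem skew_isogram_line_symmetric_general (P₁ P₂ P₃ P₄ : Fin 3 → ℝ)
    (h₁ : sqDist P₁ P₂ = sqDist P₃ P₄)
    (h₂ : sqDist P₂ P₃ = sqDist P₄ P₁) :
    ∃ c u : Fin 3 → ℝ, (∑ k, (u k) ^ 2 = 1) ∧
      halfTurn c u P₁ = P₃ ∧ halfTurn c u P₂ = P₄ ∧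
      halfTurn c u P₃ = P₁ ∧ halfTurn c u P₄ = P₂ ∧
      (∃ lam₁ : ℝ, (1 / 2 : ℝ) • (P₁ + P₃) = c + lam₁ • u) ∧
      (∃ lam₂ : ℝ, (1 / 2 : ℝ) • (P₂ + P₄) = c + lam₂ • u) := by
  obtain ⟨hd₁, hd₂⟩ := isogram_diagonals_orthogonal h₁ h₂
  obtain ⟨u, hu, hu₁, hu₂, t, ht⟩ :=
    exists_dotProduct_self_eq_one_dotProduct_eq_zero_and_eq_smul hd₁ hd₂
  set c := (1 / 2 : ℝ) • (P₁ + P₃)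
  have hmid₁ : (1 / 2 : ℝ) • (P₁ + P₃) = c + (0 : ℝ) • u := by
    rw [zero_smul, add_zero]
  have hmid₂ : (1 / 2 : ℝ) • (P₂ + P₄) = c + (t / 2) • u := by
    linear_combination (norm := module) (1 / 2 : ℝ) • ht
  have h₁₃ := halfTurn_eq_of_midpoint hu hu₁ hmid₁
  have h₂₄ := halfTurn_eq_of_midpoint hu hu₂ hmid₂
  refine ⟨c, u, by simpa [dotProduct, sq] using hu, h₁₃, h₂₄,
    by rw [← h₁₃, halfTurn_halfTurn hu], by rw [← h₂₄, halfTurn_halfTurn hu],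
    ⟨0, hmid₁⟩, ⟨t / 2, hmid₂⟩⟩

/-- Cayley: a skew quadrilateral with equal opposite side lengths (a skew isogram)
is line-symmetric; the half-turn about the symmetry axis swaps opposite vertices,
and the axis passes through the midpoints of both diagonals. -/
theorem skew_isogram_line_symmetric (P₁ P₂ P₃ P₄ : Fin 3 → ℝ)
    (hcol : ¬ Collinear ℝ ({P₁, P₂, P₃, P₄} : Set (Fin 3 → ℝ)))
    (h₁ : sqDist P₁ P₂ = sqDist P₃ P₄)
    (h₂ : sqDist P₂ P₃ = sqDist P₄ P₁) :
    ∃ c u : Fin 3 → ℝ, (∑ k, (u k) ^ 2 = 1) ∧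
      halfTurn c u P₁ = P₃ ∧ halfTurn c u P₂ = P₄ ∧
      halfTurn c u P₃ = P₁ ∧ halfTurn c u P₄ = P₂ ∧
      (∃ lam₁ : ℝ, (1 / 2 : ℝ) • (P₁ + P₃) = c + lam₁ • u) ∧
      (∃ lam₂ : ℝ, (1 / 2 : ℝ) • (P₂ + P₄) = c + lam₂ • u) :=
  skew_isogram_line_symmetric_general P₁ P₂ P₃ P₄ h₁ h₂
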